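/- Let φ be an oracle for a point x in an effective topology (B, ν) with a recursively enumerable subset relation. Then there exists a nested oracle ψ for x in (B, ν) that is recursive relative to φ, uniformly in φ. -/

import Mathlib

/-- Cantor's pairing function `⟨x,y⟩ = (x² + 2xy + y² + 3x + y)/2`. -/
def cantorPair (x y : ℕ) : ℕ := (x * x + 2 * x * y + y * y + 3 * x + y) / 2

/-- Partial functions `ℕ →. ℕ` that are computable uniformly relative to an oracle:
`PartrecIn F` says that the functional `O ↦ F O` is computed by a single oracle machine,
so that `F O` is partial recursive relative to `O`, uniformly in the oracle `O`. -/
inductive PartrecIn : ((ℕ →. ℕ) → ℕ →. ℕ) → Prop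
  | oracle : PartrecIn fun O => O
  | zero : PartrecIn fun _ => pure 0
  | succ : PartrecIn fun _ => ↑Nat.succ
  | left : PartrecIn fun _ => ↑fun n : ℕ => n.unpair.1
  | right : PartrecIn fun _ => ↑fun n : ℕ => n.unpair.2
  | pair {F G} : PartrecIn F → PartrecIn G →
      PartrecIn fun O n => Nat.pair <$> F O n <*> G O n
  | comp {F G} : PartrecIn F → PartrecIn G →
      PartrecIn fun O n => G O n >>= F O
  | prec {F G} : PartrecIn F → PartrecIn G →
      PartrecIn fun O => Nat.unpaired fun a n =>
        n.rec (F O a) fun y IH => do let i ← IH; G O (Nat.pair a (Nat.pair y i))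
  | rfind {F} : PartrecIn F →
      PartrecIn fun O a => Nat.rfind fun n => (fun m => m = 0) <$> F O (Nat.pair a n)

/-- `L` is a local basis for the point `x` with respect to the basis `Bas`. -/
def IsLocalBasis {X : Type*} (Bas : Set (Set X)) (L : Set (Set X)) (x : X) : Prop :=
  L ⊆ Bas ∧ (∀ l ∈ L, x ∈ l) ∧ ∀ b ∈ Bas, x ∈ b → ∃ l ∈ L, l ⊆ b

/-- `φ : ℕ → dom` is an oracle for the point `x` in the effective topology whose basis
is coded by `code` on the domain `dom`: the image under `code` of the range of `φ`
is a local basis for `x`. -/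
def IsOracleFor {X : Type*} (dom : Set ℕ) (code : ℕ → Set X) (x : X) (φ : ℕ → ℕ) : Prop :=
  (∀ n, φ n ∈ dom) ∧ IsLocalBasis (code '' dom) (code '' Set.range φ) x

/-- An oracle is nested iff the coded basis elements are decreasing along its values. -/
def IsNestedOracleFor {X : Type*} (dom : Set ℕ) (code : ℕ → Set X) (x : X)
    (φ : ℕ → ℕ) : Prop :=
  IsOracleFor dom code x φ ∧ ∀ n, code (φ (n + 1)) ⊆ code (φ n)

/-- The effective topology `(B, ν)` (with `B = code '' dom`) has a recursively
enumerable subset relation. -/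
def RESubsetRel {X : Type*} (dom : Set ℕ) (code : ℕ → Set X) : Prop :=
  REPred fun p : ℕ =>
    ∃ b₁ ∈ dom, ∃ b₂ ∈ dom, p = cantorPair b₁ b₂ ∧ code b₁ ⊆ code b₂


/-!
Set `ψ 0 = φ 0` and let `ψ (n + 1)` be `φ m` for the first `m` found by a dovetailed search
over `m` and two running times of the enumeration of the subset relation that certify
`ν(φ m) ⊆ ν(ψ n)` and `ν(φ m) ⊆ ν(φ (n + 1))`. The search succeeds because
`ν(ψ n) ∩ ν(φ (n + 1))` is an open neighbourhood of `x`, so it contains a basis element around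
`x` and hence some `ν(φ m)`. Then `ψ` is nested, and since each `ψ n` is a value of `φ` with
`ν(ψ n) ⊆ ν(φ n)`, it is again an oracle for `x`.
-/

theorem two_mul_cantorPair (x y : ℕ) :
    2 * cantorPair x y = (x + y) * (x + y + 1) + 2 * x := by
  have h : x * x + 2 * x * y + y * y + 3 * x + y = (x + y) * (x + y + 1) + 2 * x := by ring
  rw [cantorPair, h,
    Nat.mul_div_cancel' ((Nat.even_mul_succ_self _).two_dvd.add (dvd_mul_right 2 x))]

theorem cantorPair_lt_of_add_lt {a b x y : ℕ} (h : a + b < x + y) :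
    cantorPair a b < cantorPair x y := by
  have : (a + b + 1) * (a + b + 2) ≤ (x + y) * (x + y + 1) := Nat.mul_le_mul h (by omega)
  nlinarith [two_mul_cantorPair a b, two_mul_cantorPair x y]

theorem cantorPair_injective : Function.Injective2 cantorPair := by
  intro a x b y h
  have hs : a + b = x + y := by
    by_contra hne
    rcases Nat.lt_or_gt_of_ne hne with hlt | hlt
    · exact (cantorPair_lt_of_add_lt hlt).ne h
    · exact (cantorPair_lt_of_add_lt hlt).ne' h
  have h2 := congrArg (2 * ·) h
  simp only [two_mul_cantorPair, hs] at h2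
  omega

theorem primrec_cantorPair : Primrec₂ cantorPair := by
  unfold cantorPair
  refine Primrec.nat_div.comp ?_ (Primrec.const 2)
  have x : Primrec₂ fun x _ : ℕ => x := .left
  have y : Primrec₂ fun _ y : ℕ => y := .right
  have add := Primrec.nat_add
  have mul := Primrec.nat_mul
  exact add.comp₂ (add.comp₂ (add.comp₂ (add.comp₂ (mul.comp₂ x x)
    (mul.comp₂ (mul.comp₂ (.const 2) x) y)) (mul.comp₂ y y)) (mul.comp₂ (.const 3) x)) y

theorem REPred.exists_primrec_certificate {p : ℕ → Prop} (hp : REPred p) :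
    ∃ cert : ℕ → ℕ → Bool, Primrec₂ cert ∧ ∀ n, p n ↔ ∃ t, cert t n = true := by
  obtain ⟨c, hc⟩ := Nat.Partrec.Code.exists_code.1
    (Partrec.nat_iff.1 (hp.map (Computable.const 0).to₂))
  refine ⟨fun t n => (c.evaln t n).isSome, ?_, fun n => ?_⟩
  · exact Primrec.option_isSome.comp
      (Nat.Partrec.Code.primrec_evaln.comp ((Primrec.fst.pair (.const c)).pair .snd))
  · have : p n ↔ (c.eval n).Dom := by simp [hc, Part.assert]
    simp only [this, Part.dom_iff_mem, Nat.Partrec.Code.evaln_complete, Option.isSome_iff_exists]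
    exact exists_comm

theorem RESubsetRel.exists_certificate {X : Type*} {dom : Set ℕ} {code : ℕ → Set X}
    (h : RESubsetRel dom code) :
    ∃ cert : ℕ → ℕ → ℕ → Bool, Primrec (fun p : ℕ × ℕ × ℕ => cert p.1 p.2.1 p.2.2) ∧
      ∀ a b, (a ∈ dom ∧ b ∈ dom ∧ code a ⊆ code b) ↔ ∃ t, cert t a b := by
  obtain ⟨cert, hcert, hspec⟩ := REPred.exists_primrec_certificate h
  refine ⟨fun t a b => cert t (cantorPair a b),
    hcert.comp .fst (primrec_cantorPair.comp (Primrec.fst.comp .snd) (Primrec.snd.comp .snd)),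
    fun a b => Iff.trans ?_ (hspec _)⟩
  constructor
  · rintro ⟨ha, hb, hab⟩
    exact ⟨a, ha, b, hb, rfl, hab⟩
  · rintro ⟨a', ha', b', hb', heq, hab⟩
    obtain ⟨rfl, rfl⟩ := cantorPair_injective heq
    exact ⟨ha', hb', hab⟩

namespace PartrecIn

variable {F G : (ℕ →. ℕ) → ℕ →. ℕ}

theorem of_eq (hF : PartrecIn F) (H : ∀ O n, F O n = G O n) : PartrecIn G :=
  (funext fun O => funext (H O) : F = G) ▸ hF

theorem of_partrec {f : ℕ →. ℕ} (hf : Nat.Partrec f) : PartrecIn fun _ => f := by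
  induction hf with
  | zero => exact zero
  | succ => exact succ
  | left => exact left
  | right => exact right
  | pair _ _ ihf ihg => exact pair ihf ihg
  | comp _ _ ihf ihg => exact comp ihf ihg
  | prec _ _ ihf ihg => exact prec ihf ihg
  | rfind _ ih => exact rfind ih

theorem of_primrec {f : ℕ → ℕ} (hf : Primrec f) : PartrecIn fun _ => (f : ℕ →. ℕ) :=
  of_partrec (Nat.Partrec.of_primrec (Primrec.nat_iff.mp hf))

theorem comp_primrec (hF : PartrecIn F) {f : ℕ → ℕ} (hf : Primrec f) :
    PartrecIn fun O n => F O (f n) :=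
  (comp hF (of_primrec hf)).of_eq fun _ _ => Part.bind_some _ _

theorem map_primrec (hF : PartrecIn F) {f : ℕ → ℕ} (hf : Primrec f) :
    PartrecIn fun O n => (F O n).map f :=
  (comp (of_primrec hf) hF).of_eq fun _ _ => Part.bind_some_eq_map _ _

theorem of_two_queries {g h : ℕ → ℕ} (hg : Primrec g) (hh : Primrec h) {f : ℕ → ℕ → ℕ → ℕ}
    (hf : Primrec fun p : ℕ × ℕ × ℕ => f p.1 p.2.1 p.2.2) :
    PartrecIn fun O n => (O (g n)).bind fun a => (O (h n)).map (f n a) := by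
  have hf' : Primrec fun w : ℕ => f w.unpair.1 w.unpair.2.unpair.1 w.unpair.2.unpair.2 := by
    have u₁ : Primrec fun n : ℕ => n.unpair.1 := Primrec.fst.comp .unpair
    have u₂ : Primrec fun n : ℕ => n.unpair.2 := Primrec.snd.comp .unpair
    exact hf.comp (u₁.pair ((u₁.comp u₂).pair (u₂.comp u₂)))
  refine (map_primrec (pair (of_primrec .id) (pair (oracle.comp_primrec hg)
    (oracle.comp_primrec hh))) hf').of_eq fun O n => ?_
  simp [Seq.seq, PFun.coe_val, Part.map_map, Function.comp_def]

end PartrecIn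

section NestedOracleMachine

variable (cert : ℕ → ℕ → ℕ → Bool)

/- `u = ⟪⟪_, ⟪n, v⟫⟫, ⟪m, ⟪t₁, t₂⟫⟫⟫` with `v` the current value and `a = φ m`, `b = φ (n + 1)`.
The result is `0` (success for `Nat.rfind`) iff `cert` confirms `ν a ⊆ ν v` within `t₁` steps
and `ν a ⊆ ν b` within `t₂` steps. -/
def refineTest (u a b : ℕ) : ℕ :=
  bif cert u.unpair.2.unpair.2.unpair.1 a u.unpair.1.unpair.2.unpair.2 &&
      cert u.unpair.2.unpair.2.unpair.2 a b then 0 else 1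

def refineQuery (O : ℕ →. ℕ) (u : ℕ) : Part ℕ :=
  (O u.unpair.2.unpair.1).bind fun a =>
    (O (u.unpair.1.unpair.2.unpair.1 + 1)).map (refineTest cert u a)

def refineStep (O : ℕ →. ℕ) (q : ℕ) : Part ℕ :=
  (Nat.rfind fun s => (fun k => k = 0) <$> refineQuery cert O (Nat.pair q s)).bind
    fun s => O s.unpair.1

def nestedOracleMachine (O : ℕ →. ℕ) (n : ℕ) : Part ℕ :=
  n.rec (O 0) fun y IH => IH.bind fun v => refineStep cert O (Nat.pair 0 (Nat.pair y v))

theorem nestedOracleMachine_succ (O : ℕ →. ℕ) (n : ℕ) :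
    nestedOracleMachine cert O (n + 1) =
      (nestedOracleMachine cert O n).bind fun v =>
        refineStep cert O (Nat.pair 0 (Nat.pair n v)) :=
  rfl

variable {cert}

theorem partrecIn_nestedOracleMachine
    (hcert : Primrec fun p : ℕ × ℕ × ℕ => cert p.1 p.2.1 p.2.2) :
    PartrecIn (nestedOracleMachine cert) := by
  have u₁ : Primrec fun n : ℕ => n.unpair.1 := Primrec.fst.comp .unpair
  have u₂ : Primrec fun n : ℕ => n.unpair.2 := Primrec.snd.comp .unpair
  have hTest : Primrec fun p : ℕ × ℕ × ℕ => refineTest cert p.1 p.2.1 p.2.2 := by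
    have u : Primrec fun p : ℕ × ℕ × ℕ => p.1 := .fst
    have a : Primrec fun p : ℕ × ℕ × ℕ => p.2.1 := Primrec.fst.comp .snd
    have b : Primrec fun p : ℕ × ℕ × ℕ => p.2.2 := Primrec.snd.comp .snd
    have t₁ := (u₁.comp (u₂.comp (u₂.comp u))).pair (a.pair (u₂.comp (u₂.comp (u₁.comp u))))
    have t₂ := (u₂.comp (u₂.comp (u₂.comp u))).pair (a.pair b)
    exact (Primrec.and.comp (hcert.comp t₁) (hcert.comp t₂)).cond (.const 0) (.const 1)
  have hQuery : PartrecIn (refineQuery cert) :=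
    PartrecIn.of_two_queries (u₁.comp u₂) (Primrec.succ.comp (u₁.comp (u₂.comp u₁))) hTest
  have hStep : PartrecIn (refineStep cert) :=
    PartrecIn.comp (PartrecIn.oracle.comp_primrec u₁) (PartrecIn.rfind hQuery)
  refine ((PartrecIn.prec (PartrecIn.oracle.comp_primrec (.const 0)) hStep).comp_primrec
    (Primrec₂.natPair.comp (.const 0) .id)).of_eq fun O n => ?_
  simp only [Nat.unpaired, Nat.unpair_pair]
  rfl

variable (φ : ℕ → ℕ)

theorem refineStep_spec {n v : ℕ} (h : ∃ m t₁ t₂, cert t₁ (φ m) v ∧ cert t₂ (φ m) (φ (n + 1))) :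
    ∃ m, refineStep cert (φ : ℕ →. ℕ) (Nat.pair 0 (Nat.pair n v)) = Part.some (φ m) ∧
      (∃ t, cert t (φ m) v) ∧ ∃ t, cert t (φ m) (φ (n + 1)) := by
  set p : ℕ → Bool := fun s =>
    cert s.unpair.2.unpair.1 (φ s.unpair.1) v &&
      cert s.unpair.2.unpair.2 (φ s.unpair.1) (φ (n + 1))
  have hstep : refineStep cert (φ : ℕ →. ℕ) (Nat.pair 0 (Nat.pair n v)) =
      (Nat.rfind p).bind fun s => Part.some (φ s.unpair.1) := by
    unfold refineStep
    congr
    funext s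
    simp only [refineQuery, refineTest, p, PFun.coe_val, Nat.unpair_pair, Part.bind_some,
      Part.map_some]
    cases (_ && _) <;> rfl
  obtain ⟨m, t₁, t₂, h₁, h₂⟩ := h
  obtain ⟨s, hs, -⟩ :=
    Nat.rfind_min' (p := p) (m := Nat.pair m (Nat.pair t₁ t₂)) (by simp [p, h₁, h₂])
  have hps : p s := by simpa using Nat.rfind_spec hs
  simp only [p, Bool.and_eq_true] at hps
  refine ⟨s.unpair.1, ?_, ⟨_, hps.1⟩, ⟨_, hps.2⟩⟩
  rw [hstep, Part.eq_some_iff.2 hs, Part.bind_some]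

theorem nestedOracleMachine_spec {R : ℕ → ℕ → Prop} (hR : ∀ a b, R a b ↔ ∃ t, cert t a b)
    (hdir : ∀ k l, ∃ m, R (φ m) (φ k) ∧ R (φ m) (φ l)) :
    ∃ ψ : ℕ → ℕ, (∀ n, nestedOracleMachine cert (φ : ℕ →. ℕ) n = Part.some (ψ n)) ∧
      ψ 0 = φ 0 ∧ (∀ n, ψ n ∈ Set.range φ) ∧
      ∀ n, R (ψ (n + 1)) (ψ n) ∧ R (ψ (n + 1)) (φ (n + 1)) := by
  have step : ∀ n k, ∃ m, refineStep cert (φ : ℕ →. ℕ)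
      (Nat.pair 0 (Nat.pair n (φ k))) = Part.some (φ m) ∧ R (φ m) (φ k) ∧ R (φ m) (φ (n + 1)) := by
    intro n k
    obtain ⟨m, hm₁, hm₂⟩ := hdir k (n + 1)
    obtain ⟨t₁, ht₁⟩ := (hR _ _).1 hm₁
    obtain ⟨t₂, ht₂⟩ := (hR _ _).1 hm₂
    obtain ⟨m', hm', hk, hn⟩ := refineStep_spec φ ⟨m, t₁, t₂, ht₁, ht₂⟩
    exact ⟨m', hm', (hR _ _).2 hk, (hR _ _).2 hn⟩
  have hval : ∀ n, ∃ k, nestedOracleMachine cert (φ : ℕ →. ℕ) n = Part.some (φ k) := by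
    intro n
    induction n with
    | zero => exact ⟨0, rfl⟩
    | succ n ih =>
      obtain ⟨k, hk⟩ := ih
      obtain ⟨m, hm, -⟩ := step n k
      exact ⟨m, by rw [nestedOracleMachine_succ, hk, Part.bind_some, hm]⟩
  choose κ hκ using hval
  refine ⟨fun n => φ (κ n), hκ, Part.some_injective (hκ 0).symm, fun n => ⟨κ n, rfl⟩,
    fun n => ?_⟩
  obtain ⟨m, hm, hRm⟩ := step n (κ n)
  have : φ (κ (n + 1)) = φ m := Part.some_injective <| by
    rw [← hκ, nestedOracleMachine_succ, hκ, Part.bind_some, hm]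
  simpa only [this] using hRm

end NestedOracleMachine

namespace IsOracleFor

variable {X : Type*} {dom : Set ℕ} {code : ℕ → Set X} {x : X} {φ : ℕ → ℕ}

theorem mem_code (hφ : IsOracleFor dom code x φ) (n : ℕ) : x ∈ code (φ n) :=
  hφ.2.2.1 _ ⟨φ n, ⟨n, rfl⟩, rfl⟩

theorem exists_subset_inter [TopologicalSpace X]
    (hbasis : TopologicalSpace.IsTopologicalBasis (code '' dom))
    (hφ : IsOracleFor dom code x φ) (k l : ℕ) : ∃ m, code (φ m) ⊆ code (φ k) ∩ code (φ l) := by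
  have hopen : IsOpen (code (φ k) ∩ code (φ l)) :=
    (hbasis.isOpen ⟨_, hφ.1 k, rfl⟩).inter (hbasis.isOpen ⟨_, hφ.1 l, rfl⟩)
  obtain ⟨_, ⟨b, hb, rfl⟩, hxb, hbkl⟩ :=
    hbasis.exists_subset_of_mem_open (Set.mem_inter (hφ.mem_code k) (hφ.mem_code l)) hopen
  obtain ⟨_, ⟨_, ⟨m, rfl⟩, rfl⟩, hmb⟩ := hφ.2.2.2 _ ⟨b, hb, rfl⟩ hxb
  exact ⟨m, hmb.trans hbkl⟩

theorem of_refinement {ψ : ℕ → ℕ} (hφ : IsOracleFor dom code x φ)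
    (hrange : ∀ n, ψ n ∈ Set.range φ) (hsub : ∀ n, code (ψ n) ⊆ code (φ n)) :
    IsOracleFor dom code x ψ := by
  have hψ : ∀ n, ψ n ∈ dom ∧ x ∈ code (ψ n) := fun n => by
    obtain ⟨k, hk⟩ := hrange n
    exact hk ▸ ⟨hφ.1 k, hφ.mem_code k⟩
  refine ⟨fun n => (hψ n).1, ?_, ?_, ?_⟩
  · rintro _ ⟨_, ⟨n, rfl⟩, rfl⟩
    exact ⟨_, (hψ n).1, rfl⟩
  · rintro _ ⟨_, ⟨n, rfl⟩, rfl⟩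
    exact (hψ n).2
  · intro b hb hxb
    obtain ⟨_, ⟨_, ⟨m, rfl⟩, rfl⟩, hmb⟩ := hφ.2.2.2 b hb hxb
    exact ⟨_, ⟨_, ⟨m, rfl⟩, rfl⟩, (hsub m).trans hmb⟩

end IsOracleFor

theorem nested_oracle_of_oracle_general {X : Type*} [TopologicalSpace X]
    (dom : Set ℕ) (code : ℕ → Set X)
    (hbasis : TopologicalSpace.IsTopologicalBasis (code '' dom))
    (hre : RESubsetRel dom code) :
    ∃ F : (ℕ →. ℕ) → ℕ →. ℕ, PartrecIn F ∧
      ∀ (x : X) (φ : ℕ → ℕ), IsOracleFor dom code x φ →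
        ∃ ψ : ℕ → ℕ, (∀ n, F (fun k => Part.some (φ k)) n = Part.some (ψ n)) ∧
          IsNestedOracleFor dom code x ψ := by
  obtain ⟨cert, hcert, hspec⟩ := hre.exists_certificate
  refine ⟨nestedOracleMachine cert, partrecIn_nestedOracleMachine hcert, fun x φ hφ => ?_⟩
  have hdir : ∀ k l, ∃ m, (φ m ∈ dom ∧ φ k ∈ dom ∧ code (φ m) ⊆ code (φ k)) ∧
      (φ m ∈ dom ∧ φ l ∈ dom ∧ code (φ m) ⊆ code (φ l)) := fun k l => by
    obtain ⟨m, hm⟩ := hφ.exists_subset_inter hbasis k l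
    exact ⟨m, ⟨hφ.1 m, hφ.1 k, hm.trans Set.inter_subset_left⟩,
      ⟨hφ.1 m, hφ.1 l, hm.trans Set.inter_subset_right⟩⟩
  obtain ⟨ψ, hψ, hψ₀, hrange, hsucc⟩ := nestedOracleMachine_spec φ hspec hdir
  refine ⟨ψ, hψ, hφ.of_refinement hrange ?_, fun n => (hsucc n).1.2.2⟩
  rintro (_ | n)
  · rw [hψ₀]
  · exact (hsucc n).2.2.2

/-- Let `φ` be an oracle for a point `x` in an effective topology `(B, ν)`
with a recursively enumerable subset relation.  Then there exists a nested oracle `ψ`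
for `x` in `(B, ν)` that is recursive relative to `φ`, uniformly in `φ`. -/
theorem nested_oracle_of_oracle {X : Type*} [TopologicalSpace X] [T0Space X]
    (dom : Set ℕ) (code : ℕ → Set X)
    (hbasis : TopologicalSpace.IsTopologicalBasis (code '' dom))
    (hre : RESubsetRel dom code) :
    ∃ F : (ℕ →. ℕ) → ℕ →. ℕ, PartrecIn F ∧
      ∀ (x : X) (φ : ℕ → ℕ), IsOracleFor dom code x φ →
        ∃ ψ : ℕ → ℕ, (∀ n, F (fun k => Part.some (φ k)) n = Part.some (ψ n)) ∧
          IsNestedOracleFor dom code x ψ :=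
  nested_oracle_of_oracle_general dom code hbasis hre
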